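/- In the set-cover apex graph, for F corresponding to a set cover of size κ, the spread of {q} equals ν + κ + 1: q reaches itself, the κ nodes v_j with (q,v_j) ∈ F, and all ν ground-element nodes u_i. -/

import Mathlib

/-- The set of nodes reachable from a seed set `S` in the directed graph with
edge relation `r` (including the seeds themselves). -/
def reachSet {V : Type*} (r : V → V → Prop) (S : Set V) : Set V :=
  {v | ∃ s ∈ S, Relation.ReflTransGen r s v}

/-- Nodes of the set-cover reduction graph: set nodes `A = {v₁,…,v_μ}`,
ground-element nodes `B = {u₁,…,u_ν}`, and the extra node `q`. -/
inductive SCNode (μ ν : ℕ) where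
  | a : Fin μ → SCNode μ ν
  | b : Fin ν → SCNode μ ν
  | q : SCNode μ ν
  deriving DecidableEq, Fintype

/-- The deterministic base edges of the set-cover graph: `v_j → u_i` iff
`U_i ∈ D_j`, where `D j` is the `j`-th set of the set-cover instance. -/
def scEdge (μ ν : ℕ) (D : Fin μ → Set (Fin ν)) : SCNode μ ν → SCNode μ ν → Prop
  | .a j, .b i => i ∈ D j
  | _, _ => False

/-! The reachable set from `q` is `{q} ∪ {v_j : j ∈ 𝒮} ∪ B`: this set contains `q` and is closed
under the edges (only `q` gains new out-edges, and they land in `{v_j : j ∈ 𝒮}`), and conversely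
`q → v_j → u_i` reaches every `u_i` because `𝒮` covers the ground set. The three parts are
disjoint, so the count is `1 + κ + ν`. -/

theorem reachSet_subset_of_closed {V : Type*} {r : V → V → Prop} {S T : Set V}
    (hST : S ⊆ T) (hT : ∀ x y, r x y → x ∈ T → y ∈ T) : reachSet r S ⊆ T := by
  rintro v ⟨s, hs, hsv⟩
  induction hsv with
  | refl => exact hST hs
  | tail _ hxy ih => exact hT _ _ hxy ih

namespace SCNode

variable {μ ν : ℕ}

/-- The base graph together with the added edges `F = {(q, v_j) : j ∈ 𝒮}`. -/
def apexEdge (D : Fin μ → Set (Fin ν)) (𝒮 : Finset (Fin μ)) (x y : SCNode μ ν) : Prop :=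
  scEdge μ ν D x y ∨ (x = q ∧ ∃ j ∈ 𝒮, y = a j)

def apexReach (𝒮 : Finset (Fin μ)) : Finset (SCNode μ ν) :=
  insert q (𝒮.image a ∪ Finset.univ.image b)

theorem card_apexReach (𝒮 : Finset (Fin μ)) :
    (apexReach 𝒮 : Finset (SCNode μ ν)).card = ν + 𝒮.card + 1 := by
  have hdisj : Disjoint (𝒮.image a) (Finset.univ.image (b (μ := μ) (ν := ν))) := by
    simp [Finset.disjoint_left]
  have hq : q ∉ 𝒮.image a ∪ Finset.univ.image (b (μ := μ) (ν := ν)) := by simp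
  rw [apexReach, Finset.card_insert_of_notMem hq, Finset.card_union_of_disjoint hdisj,
    Finset.card_image_of_injective _ fun _ _ => a.inj,
    Finset.card_image_of_injective _ fun _ _ => b.inj, Finset.card_univ, Fintype.card_fin]
  omega

theorem reachSet_apexEdge_subset (D : Fin μ → Set (Fin ν)) (𝒮 : Finset (Fin μ)) :
    reachSet (apexEdge D 𝒮) {q} ⊆ ↑(apexReach 𝒮 : Finset (SCNode μ ν)) := by
  refine reachSet_subset_of_closed (by simp [apexReach]) ?_
  rintro x y (hxy | ⟨rfl, j, hj, rfl⟩) -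
  · cases x <;> cases y <;> simp_all [scEdge, apexReach]
  · simp [apexReach, hj]

theorem apexReach_subset_reachSet {D : Fin μ → Set (Fin ν)} {𝒮 : Finset (Fin μ)}
    (hcover : ∀ i : Fin ν, ∃ j ∈ 𝒮, i ∈ D j) :
    ↑(apexReach 𝒮 : Finset (SCNode μ ν)) ⊆ reachSet (apexEdge D 𝒮) {q} := by
  have hqa : ∀ j ∈ 𝒮, apexEdge D 𝒮 q (a j) := fun j hj => Or.inr ⟨rfl, j, hj, rfl⟩
  intro x hx
  refine ⟨q, rfl, ?_⟩
  simp only [apexReach, Finset.coe_insert, Finset.coe_union, Finset.coe_image, Finset.coe_univ,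
    Set.image_univ, Set.mem_insert_iff, Set.mem_union, Set.mem_image, Finset.mem_coe,
    Set.mem_range] at hx
  rcases hx with rfl | ⟨j, hj, rfl⟩ | ⟨i, rfl⟩
  · exact .refl
  · exact .single (hqa j hj)
  · obtain ⟨j, hj, hij⟩ := hcover i
    exact .head (hqa j hj) (.single (Or.inl hij))

end SCNode

/-- In the set-cover apex graph, for `F` corresponding to a set cover `𝒮` of
size exactly `κ`, the spread of `{q}` equals `ν + κ + 1`: `q` reaches itself,
the `κ` nodes `v_j` with `(q, v_j) ∈ F`, and all `ν` ground-element nodes. -/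
theorem setcover_apex_spread (μ ν κ : ℕ) (D : Fin μ → Set (Fin ν))
    (𝒮 : Finset (Fin μ)) (hcard : 𝒮.card = κ)
    (hcover : ∀ i : Fin ν, ∃ j ∈ 𝒮, i ∈ D j) :
    (reachSet (fun x y => scEdge μ ν D x y ∨ (x = SCNode.q ∧ ∃ j ∈ 𝒮, y = SCNode.a j))
        {SCNode.q}).ncard = ν + κ + 1 := by
  have hreach : reachSet (SCNode.apexEdge D 𝒮) {SCNode.q} =
      ↑(SCNode.apexReach 𝒮 : Finset (SCNode μ ν)) :=
    (SCNode.reachSet_apexEdge_subset D 𝒮).antisymm (SCNode.apexReach_subset_reachSet hcover)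
  change (reachSet (SCNode.apexEdge D 𝒮) {SCNode.q}).ncard = _
  rw [hreach, Set.ncard_coe_finset, SCNode.card_apexReach, hcard]
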